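/- Let A = conv(0, e_1, e_2, e_1 + e_2, e_3) ⊂ ℝ³ be the square pyramid, B = [0, e_1] and C = [0, e_2]. Then V(A,A,A)·V(A,B,C) = 2·V(A,A,B)·V(A,A,C), where V is the mixed volume in ℝ³. -/

import Mathlib

open MeasureTheory

/-- The segment joining the origin to `v`, as a convex body in `ℝ³`. -/
noncomputable def segCB (v : Fin 3 → ℝ) : ConvexBody (Fin 3 → ℝ) :=
  ⟨segment ℝ 0 v, convex_segment 0 v,
    by rw [← convexHull_pair]; exact (Set.toFinite {0, v}).isCompact_convexHull ℝ,
    ⟨0, left_mem_segment ℝ 0 v⟩⟩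

/-- The square pyramid `conv(0, e₁, e₂, e₁+e₂, e₃)`, as a convex body in `ℝ³`. -/
noncomputable def pyramidCB : ConvexBody (Fin 3 → ℝ) :=
  ⟨convexHull ℝ {0, ![1, 0, 0], ![0, 1, 0], ![1, 1, 0], ![0, 0, 1]},
    convex_convexHull ℝ _,
    (Set.toFinite _).isCompact_convexHull ℝ,
    ⟨0, subset_convexHull ℝ _ (by simp)⟩⟩

/-!
Write `P` for the pyramid and `B`, `C` for the two segments. For `s, t ≥ 0` the body
`P + s B + t C` is `{0 ≤ z ≤ 1, 0 ≤ x ≤ s + 1 - z, 0 ≤ y ≤ t + 1 - z}`, of volume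
`s t + (s + t) / 2 + 1 / 3`, while `B` and `C` lie in the plane `z = 0`. Polarization of the
symmetric trilinear form `V` on the bodies `P + m B + n C` (`m + n ≤ 2`) gives
`V(P,P,P) = 1/3` and `V(P,P,B) = V(P,P,C) = V(P,B,C) = 1/6`, and `1/3 · 1/6 = 2 · (1/6)²`.
-/

structure IsSymmTrilinear {M : Type*} [Add M] (V : M → M → M → ℝ) : Prop where
  swap₁₂ : ∀ K L N, V K L N = V L K N
  swap₂₃ : ∀ K L N, V K L N = V K N L
  add_left : ∀ K L N P, V (K + L) N P = V K N P + V L N P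

namespace IsSymmTrilinear

variable {M : Type*} [Add M] {V : M → M → M → ℝ} (hV : IsSymmTrilinear V)
include hV

theorem add_mid (K L N P : M) : V K (L + N) P = V K L P + V K N P := by
  rw [hV.swap₁₂, hV.add_left, hV.swap₁₂ L, hV.swap₁₂ N]

theorem add_right (K L N P : M) : V K P (L + N) = V K P L + V K P N := by
  rw [hV.swap₂₃, hV.add_mid, hV.swap₂₃ K L, hV.swap₂₃ K N]

theorem add_add_left (K L N : M) :
    V (K + L) (K + L) N = V K K N + 2 * V K L N + V L L N := by
  rw [hV.add_left, hV.add_mid, hV.add_mid, hV.swap₁₂ L K]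
  ring

theorem diag_add (K L : M) :
    V (K + L) (K + L) (K + L) = V K K K + 3 * V K K L + 3 * V K L L + V L L L := by
  rw [hV.add_right, hV.add_add_left, hV.add_add_left, hV.swap₂₃ K L K, hV.swap₂₃ L L K,
    hV.swap₁₂ L K L]
  ring

theorem polarization (K L N : M) :
    6 * V K L N = V (K + L + N) (K + L + N) (K + L + N) - V (K + L) (K + L) (K + L)
      - V (K + N) (K + N) (K + N) - V (L + N) (L + N) (L + N) + V K K K + V L L L + V N N N := by
  linear_combination -hV.diag_add (K + L) N - 3 * hV.add_add_left K L N
    - 3 * hV.add_left K L N N + hV.diag_add K N + hV.diag_add L N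

end IsSymmTrilinear

open Set Pointwise

theorem mem_segment_zero_iff {E : Type*} [AddCommGroup E] [Module ℝ E] {v x : E} :
    x ∈ segment ℝ 0 v ↔ ∃ θ ∈ Icc (0 : ℝ) 1, θ • v = x := by
  simp [segment_eq_image']

theorem exists_mem_Icc_sub_mem_Icc {a x : ℝ} (ha : 0 ≤ a) (hx : x ∈ Icc 0 (a + 1)) :
    ∃ θ ∈ Icc (0 : ℝ) 1, x - θ ∈ Icc 0 a := by
  refine ⟨max 0 (x - a), ⟨le_max_left _ _, max_le zero_le_one (by linarith [hx.2])⟩, ?_, ?_⟩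
  · exact sub_nonneg.2 (max_le hx.1 (by linarith))
  · linarith [le_max_right 0 (x - a)]

def pyramidRegion (s t : ℝ) : Set (Fin 3 → ℝ) :=
  {p | p 2 ∈ Icc 0 1 ∧ p 0 ∈ Icc 0 (s + 1 - p 2) ∧ p 1 ∈ Icc 0 (t + 1 - p 2)}

theorem convex_pyramidRegion (s t : ℝ) : Convex ℝ (pyramidRegion s t) := by
  rintro p ⟨⟨hp₁, hp₂⟩, ⟨hp₃, hp₄⟩, hp₅, hp₆⟩ q ⟨⟨hq₁, hq₂⟩, ⟨hq₃, hq₄⟩, hq₅, hq₆⟩ a b ha hb hab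
  refine ⟨⟨?_, ?_⟩, ⟨?_, ?_⟩, ?_, ?_⟩ <;> simp only [Pi.add_apply, Pi.smul_apply, smul_eq_mul] <;>
    nlinarith

theorem coe_pyramidCB : (pyramidCB : Set (Fin 3 → ℝ)) = pyramidRegion 0 0 := by
  refine (convexHull_min ?_ (convex_pyramidRegion 0 0)).antisymm ?_
  · rintro p (rfl | rfl | rfl | rfl | rfl) <;> simp [pyramidRegion]
  · rintro p ⟨⟨hz₀, hz₁⟩, ⟨hx₀, hx₁⟩, hy₀, hy₁⟩
    have w₀ : 0 ≤ 1 - p 2 - max (p 0) (p 1) :=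
      sub_nonneg.2 (max_le (by linarith) (by linarith))
    have w₁ : 0 ≤ p 0 - min (p 0) (p 1) := sub_nonneg.2 (min_le_left _ _)
    have w₂ : 0 ≤ p 1 - min (p 0) (p 1) := sub_nonneg.2 (min_le_right _ _)
    have w₃ : 0 ≤ min (p 0) (p 1) := le_min hx₀ hy₀
    have key := (convex_convexHull ℝ {(0 : Fin 3 → ℝ), ![1, 0, 0], ![0, 1, 0], ![1, 1, 0],
      ![0, 0, 1]}).sum_mem (t := Finset.univ)
      (w := ![1 - p 2 - max (p 0) (p 1), p 0 - min (p 0) (p 1), p 1 - min (p 0) (p 1),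
        min (p 0) (p 1), p 2])
      (z := ![0, ![1, 0, 0], ![0, 1, 0], ![1, 1, 0], ![0, 0, 1]])
      (fun i _ => by fin_cases i <;> simp_all)
      (by
        simp only [Fin.sum_univ_five, Matrix.cons_val_zero, Matrix.cons_val_one, Matrix.cons_val]
        linarith [min_add_max (p 0) (p 1)])
      (fun i _ => subset_convexHull ℝ _ (by fin_cases i <;> simp))
    convert key using 1
    ext i
    fin_cases i <;> simp [Fin.sum_univ_five]

theorem pyramidRegion_add_segment_e₁ {s : ℝ} (hs : 0 ≤ s) (t : ℝ) :
    pyramidRegion s t + segment ℝ 0 ![1, 0, 0] = pyramidRegion (s + 1) t := by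
  ext p
  simp only [mem_add, mem_segment_zero_iff]
  constructor
  · rintro ⟨q, ⟨⟨hz0, hz1⟩, ⟨hx0, hx1⟩, hy0, hy1⟩, _, ⟨θ, ⟨hθ0, hθ1⟩, rfl⟩, rfl⟩
    refine ⟨⟨?_, ?_⟩, ⟨?_, ?_⟩, ?_, ?_⟩ <;>
      simp only [Pi.add_apply, Matrix.smul_cons, smul_eq_mul, mul_one, mul_zero, Matrix.smul_empty,
        Matrix.cons_val_zero, Matrix.cons_val_one, Matrix.cons_val, add_zero] <;> linarith
  · rintro ⟨hz, hx, hy⟩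
    obtain ⟨θ, hθ, hxθ⟩ := exists_mem_Icc_sub_mem_Icc (a := s + 1 - p 2) (by linarith [hz.2])
      (by convert hx using 2; ring)
    refine ⟨p - θ • ![1, 0, 0], ⟨?_, ?_, ?_⟩, _, ⟨θ, hθ, rfl⟩, sub_add_cancel _ _⟩
    exacts [by simpa using hz, by simpa using hxθ, by simpa using hy]

theorem pyramidRegion_add_segment_e₂ (s : ℝ) {t : ℝ} (ht : 0 ≤ t) :
    pyramidRegion s t + segment ℝ 0 ![0, 1, 0] = pyramidRegion s (t + 1) := by
  ext p
  simp only [mem_add, mem_segment_zero_iff]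
  constructor
  · rintro ⟨q, ⟨⟨hz0, hz1⟩, ⟨hx0, hx1⟩, hy0, hy1⟩, _, ⟨θ, ⟨hθ0, hθ1⟩, rfl⟩, rfl⟩
    refine ⟨⟨?_, ?_⟩, ⟨?_, ?_⟩, ?_, ?_⟩ <;>
      simp only [Pi.add_apply, Matrix.smul_cons, smul_eq_mul, mul_one, mul_zero, Matrix.smul_empty,
        Matrix.cons_val_zero, Matrix.cons_val_one, Matrix.cons_val, add_zero] <;> linarith
  · rintro ⟨hz, hx, hy⟩
    obtain ⟨θ, hθ, hyθ⟩ := exists_mem_Icc_sub_mem_Icc (a := t + 1 - p 2) (by linarith [hz.2])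
      (by convert hy using 2; ring)
    refine ⟨p - θ • ![0, 1, 0], ⟨?_, ?_, ?_⟩, _, ⟨θ, hθ, rfl⟩, sub_add_cancel _ _⟩
    exacts [by simpa using hz, by simpa using hx, by simpa using hyθ]

theorem coe_add_segCB_e₁ {K : ConvexBody (Fin 3 → ℝ)} {s t : ℝ} (hs : 0 ≤ s)
    (hK : (K : Set (Fin 3 → ℝ)) = pyramidRegion s t) :
    (↑(K + segCB ![1, 0, 0]) : Set (Fin 3 → ℝ)) = pyramidRegion (s + 1) t := by
  rw [ConvexBody.coe_add, hK]
  exact pyramidRegion_add_segment_e₁ hs t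

theorem coe_add_segCB_e₂ {K : ConvexBody (Fin 3 → ℝ)} {s t : ℝ} (ht : 0 ≤ t)
    (hK : (K : Set (Fin 3 → ℝ)) = pyramidRegion s t) :
    (↑(K + segCB ![0, 1, 0]) : Set (Fin 3 → ℝ)) = pyramidRegion s (t + 1) := by
  rw [ConvexBody.coe_add, hK]
  exact pyramidRegion_add_segment_e₂ s ht

theorem integral_pyramid_slice (s t : ℝ) :
    ∫ z in (0 : ℝ)..1, (s + 1 - z) * (t + 1 - z) = s * t + (s + t) / 2 + 1 / 3 := by
  have (z : ℝ) : (s + 1 - z) * (t + 1 - z) = (s + 1) * (t + 1) - z * (s + t + 2) + z ^ 2 := by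
    ring
  simp_rw [this]
  rw [intervalIntegral.integral_add, intervalIntegral.integral_sub,
    intervalIntegral.integral_const, intervalIntegral.integral_mul_const, integral_id,
    integral_pow]
  · norm_num; ring
  all_goals exact Continuous.intervalIntegrable (by fun_prop) _ _

theorem volume_pyramidRegion {s t : ℝ} (hs : 0 ≤ s) (ht : 0 ≤ t) :
    volume (pyramidRegion s t) = ENNReal.ofReal (s * t + (s + t) / 2 + 1 / 3) := by
  let S : Set (ℝ × (Fin 2 → ℝ)) := {q | q.1 ∈ Icc 0 1 ∧ q.2 ∈ Icc 0 ![s + 1 - q.1, t + 1 - q.1]}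
  have hS : MeasurableSet S := by measurability
  have hslice (z : ℝ) : volume (Prod.mk z ⁻¹' S) =
      (Icc 0 1).indicator (fun z => ENNReal.ofReal ((s + 1 - z) * (t + 1 - z))) z := by
    by_cases hz : z ∈ Icc (0 : ℝ) 1
    · have : Prod.mk z ⁻¹' S = Icc 0 ![s + 1 - z, t + 1 - z] := by
        ext; simp only [S, mem_preimage, mem_ofPred_eq, hz, true_and]
      rw [this, Real.volume_Icc_pi, Fin.prod_univ_two, indicator_of_mem hz,
        ENNReal.ofReal_mul (by linarith [hz.2])]
      simp
    · have : Prod.mk z ⁻¹' S = ∅ := by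
        ext; simp only [S, mem_preimage, mem_ofPred_eq, hz, false_and, mem_empty_iff_false]
      rw [this, indicator_of_notMem hz, measure_empty]
  have hpre : pyramidRegion s t = MeasurableEquiv.piFinSuccAbove (fun _ => ℝ) 2 ⁻¹' S := by
    have : (Fin.succAbove 2 1 : Fin 3) = 1 := rfl
    ext p
    simp [pyramidRegion, S, Pi.le_def, Fin.forall_fin_two, Fin.removeNth, this, and_and_and_comm]
  calc volume (pyramidRegion s t)
      = volume.prod volume S := by
        rw [hpre]
        exact (measurePreserving_piFinSuccAbove (fun _ => volume) 2).measure_preimage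
          hS.nullMeasurableSet
    _ = ∫⁻ z in Icc 0 1, ENNReal.ofReal ((s + 1 - z) * (t + 1 - z)) := by
        rw [Measure.prod_apply hS, ← lintegral_indicator measurableSet_Icc]
        simp_rw [hslice]
    _ = ENNReal.ofReal (∫ z in (0 : ℝ)..1, (s + 1 - z) * (t + 1 - z)) := by
        rw [intervalIntegral.integral_of_le zero_le_one, ← integral_Icc_eq_integral_Ioc,
          ofReal_integral_eq_lintegral_ofReal]
        · exact Continuous.integrableOn_Icc (by fun_prop)
        · filter_upwards [ae_restrict_mem measurableSet_Icc] with z hz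
          exact mul_nonneg (by linarith [hz.2]) (by linarith [hz.2])
    _ = _ := by rw [integral_pyramid_slice]

def horizontalPlane : Submodule ℝ (Fin 3 → ℝ) := LinearMap.ker (LinearMap.proj 2)

theorem volume_eq_zero_of_subset_horizontalPlane {s : Set (Fin 3 → ℝ)}
    (hs : s ⊆ horizontalPlane) : volume s = 0 := by
  refine measure_mono_null hs (Measure.addHaar_submodule _ _ fun h => ?_)
  have : (![0, 0, 1] : Fin 3 → ℝ) ∈ horizontalPlane := h ▸ Submodule.mem_top
  simp [horizontalPlane] at this

theorem coe_segCB_subset_horizontalPlane {v : Fin 3 → ℝ} (hv : v 2 = 0) :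
    (segCB v : Set (Fin 3 → ℝ)) ⊆ horizontalPlane :=
  (Submodule.convex _).segment_subset (zero_mem _) (by simpa [horizontalPlane] using hv)

theorem ConvexBody.coe_add_subset_submodule {E : Type*} [TopologicalSpace E] [AddCommGroup E]
    [Module ℝ E] [ContinuousAdd E] {K L : ConvexBody E} {p : Submodule ℝ E}
    (hK : (K : Set E) ⊆ p) (hL : (L : Set E) ⊆ p) : (↑(K + L) : Set E) ⊆ p := by
  rw [ConvexBody.coe_add]
  exact Set.add_subset_iff.2 fun x hx y hy => p.add_mem (hK hx) (hL hy)

section MixedVolume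

variable {V : ConvexBody (Fin 3 → ℝ) → ConvexBody (Fin 3 → ℝ) → ConvexBody (Fin 3 → ℝ) → ℝ}
  (hvol : ∀ K, V K K K = (volume (K : Set (Fin 3 → ℝ))).toReal)
include hvol

theorem diag_eq_of_coe_eq_pyramidRegion {K : ConvexBody (Fin 3 → ℝ)} {s t : ℝ} (hs : 0 ≤ s)
    (ht : 0 ≤ t) (hK : (K : Set (Fin 3 → ℝ)) = pyramidRegion s t) :
    V K K K = s * t + (s + t) / 2 + 1 / 3 := by
  rw [hvol, hK, volume_pyramidRegion hs ht, ENNReal.toReal_ofReal (by positivity)]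

theorem diag_eq_zero_of_coe_subset_horizontalPlane {K : ConvexBody (Fin 3 → ℝ)}
    (hK : (K : Set (Fin 3 → ℝ)) ⊆ horizontalPlane) : V K K K = 0 := by
  rw [hvol, volume_eq_zero_of_subset_horizontalPlane hK, ENNReal.toReal_zero]

variable (hV : IsSymmTrilinear V)
include hV

theorem mixed_pyramid_pyramid_segCB_e₁ : V pyramidCB pyramidCB (segCB ![1, 0, 0]) = 1 / 6 := by
  have hPB := coe_add_segCB_e₁ le_rfl coe_pyramidCB
  have hB := coe_segCB_subset_horizontalPlane (v := ![1, 0, 0]) rfl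
  have hPBB : V pyramidCB (segCB ![1, 0, 0]) (segCB ![1, 0, 0]) = 0 := by
    linarith [hV.polarization pyramidCB (segCB ![1, 0, 0]) (segCB ![1, 0, 0]),
      diag_eq_of_coe_eq_pyramidRegion hvol (by positivity) le_rfl
        (coe_add_segCB_e₁ (by positivity) hPB),
      diag_eq_of_coe_eq_pyramidRegion hvol (by positivity) le_rfl hPB,
      diag_eq_of_coe_eq_pyramidRegion hvol le_rfl le_rfl coe_pyramidCB,
      diag_eq_zero_of_coe_subset_horizontalPlane hvol hB,
      diag_eq_zero_of_coe_subset_horizontalPlane hvol (ConvexBody.coe_add_subset_submodule hB hB)]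
  linarith [hV.diag_add pyramidCB (segCB ![1, 0, 0]),
    diag_eq_of_coe_eq_pyramidRegion hvol (by positivity) le_rfl hPB,
    diag_eq_of_coe_eq_pyramidRegion hvol le_rfl le_rfl coe_pyramidCB,
    diag_eq_zero_of_coe_subset_horizontalPlane hvol hB]

theorem mixed_pyramid_pyramid_segCB_e₂ : V pyramidCB pyramidCB (segCB ![0, 1, 0]) = 1 / 6 := by
  have hPC := coe_add_segCB_e₂ le_rfl coe_pyramidCB
  have hC := coe_segCB_subset_horizontalPlane (v := ![0, 1, 0]) rfl
  have hPCC : V pyramidCB (segCB ![0, 1, 0]) (segCB ![0, 1, 0]) = 0 := by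
    linarith [hV.polarization pyramidCB (segCB ![0, 1, 0]) (segCB ![0, 1, 0]),
      diag_eq_of_coe_eq_pyramidRegion hvol le_rfl (by positivity)
        (coe_add_segCB_e₂ (by positivity) hPC),
      diag_eq_of_coe_eq_pyramidRegion hvol le_rfl (by positivity) hPC,
      diag_eq_of_coe_eq_pyramidRegion hvol le_rfl le_rfl coe_pyramidCB,
      diag_eq_zero_of_coe_subset_horizontalPlane hvol hC,
      diag_eq_zero_of_coe_subset_horizontalPlane hvol (ConvexBody.coe_add_subset_submodule hC hC)]
  linarith [hV.diag_add pyramidCB (segCB ![0, 1, 0]),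
    diag_eq_of_coe_eq_pyramidRegion hvol le_rfl (by positivity) hPC,
    diag_eq_of_coe_eq_pyramidRegion hvol le_rfl le_rfl coe_pyramidCB,
    diag_eq_zero_of_coe_subset_horizontalPlane hvol hC]

theorem mixed_pyramid_segCB_segCB :
    V pyramidCB (segCB ![1, 0, 0]) (segCB ![0, 1, 0]) = 1 / 6 := by
  have hPB := coe_add_segCB_e₁ le_rfl coe_pyramidCB
  have hB := coe_segCB_subset_horizontalPlane (v := ![1, 0, 0]) rfl
  have hC := coe_segCB_subset_horizontalPlane (v := ![0, 1, 0]) rfl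
  linarith [hV.polarization pyramidCB (segCB ![1, 0, 0]) (segCB ![0, 1, 0]),
    diag_eq_of_coe_eq_pyramidRegion hvol (by positivity) (by positivity)
      (coe_add_segCB_e₂ le_rfl hPB),
    diag_eq_of_coe_eq_pyramidRegion hvol (by positivity) le_rfl hPB,
    diag_eq_of_coe_eq_pyramidRegion hvol le_rfl (by positivity)
      (coe_add_segCB_e₂ le_rfl coe_pyramidCB),
    diag_eq_of_coe_eq_pyramidRegion hvol le_rfl le_rfl coe_pyramidCB,
    diag_eq_zero_of_coe_subset_horizontalPlane hvol hB,
    diag_eq_zero_of_coe_subset_horizontalPlane hvol hC,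
    diag_eq_zero_of_coe_subset_horizontalPlane hvol (ConvexBody.coe_add_subset_submodule hB hC)]

end MixedVolume

theorem stmt_16_general
    (V : ConvexBody (Fin 3 → ℝ) → ConvexBody (Fin 3 → ℝ) → ConvexBody (Fin 3 → ℝ) → ℝ)
    (hsymm12 : ∀ K L M, V K L M = V L K M)
    (hsymm23 : ∀ K L M, V K L M = V K M L)
    (hadd : ∀ K L M N, V (K + L) M N = V K M N + V L M N)
    (hvol : ∀ K, V K K K = (volume (K : Set (Fin 3 → ℝ))).toReal)
    (A B C : ConvexBody (Fin 3 → ℝ))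
    (hA : A = pyramidCB) (hB : B = segCB ![1, 0, 0]) (hC : C = segCB ![0, 1, 0]) :
    V A A A * V A B C = 2 * (V A A B * V A A C) := by
  subst hA hB hC
  have hV : IsSymmTrilinear V := ⟨hsymm12, hsymm23, hadd⟩
  rw [diag_eq_of_coe_eq_pyramidRegion hvol le_rfl le_rfl coe_pyramidCB,
    mixed_pyramid_segCB_segCB hvol hV, mixed_pyramid_pyramid_segCB_e₁ hvol hV,
    mixed_pyramid_pyramid_segCB_e₂ hvol hV]
  norm_num

theorem stmt_16
    (V : ConvexBody (Fin 3 → ℝ) → ConvexBody (Fin 3 → ℝ) → ConvexBody (Fin 3 → ℝ) → ℝ)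
    (hsymm12 : ∀ K L M, V K L M = V L K M)
    (hsymm23 : ∀ K L M, V K L M = V K M L)
    (hadd : ∀ K L M N, V (K + L) M N = V K M N + V L M N)
    (hsmul : ∀ (c : ℝ) K M N, 0 ≤ c → V (c • K) M N = c * V K M N)
    (hvol : ∀ K, V K K K = (volume (K : Set (Fin 3 → ℝ))).toReal)
    (A B C : ConvexBody (Fin 3 → ℝ))
    (hA : A = pyramidCB) (hB : B = segCB ![1, 0, 0]) (hC : C = segCB ![0, 1, 0]) :
    V A A A * V A B C = 2 * (V A A B * V A A C) :=
  stmt_16_general V hsymm12 hsymm23 hadd hvol A B C hA hB hC
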